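/- arXiv:2210.09443 — 4 statements merged into one kernel-verified Lean document; each statement's English description precedes it below -/
import Mathlib

section
/- Let f ∈ L¹(Ω, ℝ^d). Then the convex-set valued map F(x) = conv{f(x), −f(x)} is measurable and integrably bounded, and its Aumann integral equals { ∫_Ω k f dμ : k ∈ L^∞(Ω, ℝ), ‖k‖_∞ ≤ 1 }. -/
/-!
Every point of `conv{a, -a}` is `c • a` with `|c| ≤ 1`, and for `a ≠ 0` the coefficient is
recovered as `⟪y, a⟫ / ‖a‖²`. Applied pointwise to a selection `g` of `conv{f, -f}` this gives a
measurable `k = ⟪g, f⟫ / ‖f‖²` with `|k| ≤ 1` and `g = k • f` a.e.; conversely `k • f` is an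
integrable selection whenever `|k| ≤ 1`. Measurability of the set-valued map holds because
`conv{f x, -f x}` meets an open `U` iff some rational multiple `q • f x` with `|q| ≤ 1` lies in `U`.
-/

open MeasureTheory

variable {d : ℕ}

/-- Measurability of a closed-set valued map. -/
def SetValuedMeasurable {Ω : Type*} [MeasurableSpace Ω]
    (F : Ω → Set (EuclideanSpace ℝ (Fin d))) : Prop :=
  ∀ U : Set (EuclideanSpace ℝ (Fin d)), IsOpen U → MeasurableSet {x | (F x ∩ U).Nonempty}

/-- `F` is integrably bounded: `F x ⊆ k x • B` a.e. for some nonnegative `k ∈ L¹`. -/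
def IntegrablyBounded {Ω : Type*} [MeasurableSpace Ω] (μ : Measure Ω)
    (F : Ω → Set (EuclideanSpace ℝ (Fin d))) : Prop :=
  ∃ k : Ω → ℝ, (∀ x, 0 ≤ k x) ∧ Integrable k μ ∧
    ∀ᵐ x ∂μ, F x ⊆ Metric.closedBall 0 (k x)

/-- The Aumann integral of a set-valued map: the set of integrals of integrable
measurable selections. -/
def AumannIntegral {Ω : Type*} [MeasurableSpace Ω] (μ : Measure Ω)
    (F : Ω → Set (EuclideanSpace ℝ (Fin d))) : Set (EuclideanSpace ℝ (Fin d)) :=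
  {y | ∃ g : Ω → EuclideanSpace ℝ (Fin d), Measurable g ∧ Integrable g μ ∧
    (∀ᵐ x ∂μ, g x ∈ F x) ∧ ∫ x, g x ∂μ = y}

open Set
open scoped RealInnerProductSpace

lemma mem_convexHull_pair_neg_iff {E : Type*} [AddCommGroup E] [Module ℝ E] {a y : E} :
    y ∈ convexHull ℝ {a, -a} ↔ ∃ c : ℝ, |c| ≤ 1 ∧ c • a = y := by
  rw [convexHull_pair]
  constructor
  · rintro ⟨s, t, hs, ht, hst, rfl⟩
    refine ⟨s - t, abs_le.2 ⟨by linarith, by linarith⟩, ?_⟩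
    rw [sub_smul, smul_neg, sub_eq_add_neg]
  · rintro ⟨c, hc, rfl⟩
    obtain ⟨hc₁, hc₂⟩ := abs_le.1 hc
    refine ⟨(1 + c) / 2, (1 - c) / 2, by linarith, by linarith, by ring, ?_⟩
    rw [smul_neg, ← sub_eq_add_neg, ← sub_smul]
    ring_nf

lemma exists_rat_smul_mem_of_smul_mem {E : Type*} [TopologicalSpace E] [AddCommGroup E]
    [Module ℝ E] [ContinuousSMul ℝ E] {a : E} {U : Set E} (hU : IsOpen U) {c : ℝ}
    (hc : |c| ≤ 1) (hcU : c • a ∈ U) : ∃ q : ℚ, |(q : ℝ)| ≤ 1 ∧ (q : ℝ) • a ∈ U := by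
  have hcont : Continuous fun t : ℝ => t • a := continuous_id.smul continuous_const
  -- `c` may be an endpoint `±1`, but it lies in the closure of `Ioo (-1) 1`.
  have hc_closure : c ∈ closure (Ioo (-1 : ℝ) 1) := by
    rw [closure_Ioo (by norm_num), mem_Icc]
    exact abs_le.1 hc
  obtain ⟨q, hqU, hq⟩ := Rat.denseRange_cast.exists_mem_open
    ((hU.preimage hcont).inter isOpen_Ioo) (mem_closure_iff.1 hc_closure _ (hU.preimage hcont) hcU)
  exact ⟨q, abs_le.2 ⟨hq.1.le, hq.2.le⟩, hqU⟩

lemma convexHull_pair_neg_subset_closedBall {E : Type*} [SeminormedAddCommGroup E]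
    [NormedSpace ℝ E] (a : E) : convexHull ℝ {a, -a} ⊆ Metric.closedBall 0 ‖a‖ :=
  (convex_closedBall 0 ‖a‖).convexHull_subset_iff.2 <| by
    simp [insert_subset_iff]

lemma inner_div_norm_sq_smul_eq_of_mem_convexHull_pair_neg {E : Type*}
    [NormedAddCommGroup E] [InnerProductSpace ℝ E] {a y : E}
    (hy : y ∈ convexHull ℝ {a, -a}) :
    |⟪y, a⟫ / ‖a‖ ^ 2| ≤ 1 ∧ (⟪y, a⟫ / ‖a‖ ^ 2) • a = y := by
  obtain ⟨c, hc, rfl⟩ := mem_convexHull_pair_neg_iff.1 hy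
  rcases eq_or_ne a 0 with rfl | ha
  · simp
  · rw [real_inner_smul_left, real_inner_self_eq_norm_sq,
      mul_div_cancel_right₀ _ (pow_ne_zero 2 (norm_ne_zero_iff.2 ha))]
    exact ⟨hc, rfl⟩

section

variable {Ω : Type*} [MeasurableSpace Ω] {μ : Measure Ω}
  {f : Ω → EuclideanSpace ℝ (Fin d)}

lemma setValuedMeasurable_convexHull_pair_neg (hf : Measurable f) :
    SetValuedMeasurable (fun x => convexHull ℝ {f x, -f x}) := by
  intro U hU
  have hrat : {x | (convexHull ℝ {f x, -f x} ∩ U).Nonempty} =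
      ⋃ q : ℚ, ⋃ _ : |(q : ℝ)| ≤ 1, {x | (q : ℝ) • f x ∈ U} := by
    ext x
    simp only [mem_iUnion, exists_prop]
    constructor
    · rintro ⟨y, hy, hyU⟩
      obtain ⟨c, hc, rfl⟩ := mem_convexHull_pair_neg_iff.1 hy
      exact exists_rat_smul_mem_of_smul_mem hU hc hyU
    · rintro ⟨q, hq, hqU⟩
      exact ⟨_, mem_convexHull_pair_neg_iff.2 ⟨q, hq, rfl⟩, hqU⟩
  rw [hrat]
  exact .iUnion fun q => .iUnion fun _ => hf.const_smul (q : ℝ) hU.measurableSet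

lemma integrablyBounded_convexHull_pair_neg (hfi : Integrable f μ) :
    IntegrablyBounded μ (fun x => convexHull ℝ {f x, -f x}) :=
  ⟨fun x => ‖f x‖, fun _ => norm_nonneg _, hfi.norm,
    .of_forall fun _ => convexHull_pair_neg_subset_closedBall _⟩

lemma aumannIntegral_convexHull_pair_neg_subset (hf : Measurable f) :
    AumannIntegral μ (fun x => convexHull ℝ {f x, -f x}) ⊆
      {y | ∃ k : Ω → ℝ, Measurable k ∧ (∀ᵐ x ∂μ, |k x| ≤ 1) ∧ ∫ x, k x • f x ∂μ = y} := by
  rintro _ ⟨g, hg, -, hgF, rfl⟩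
  -- When `f x = 0` the coefficient is `0 / 0 = 0`, so no case split is needed.
  set k : Ω → ℝ := fun x => ⟪g x, f x⟫ / ‖f x‖ ^ 2
  have hk : ∀ᵐ x ∂μ, |k x| ≤ 1 ∧ k x • f x = g x := by
    filter_upwards [hgF] with x hx
    exact inner_div_norm_sq_smul_eq_of_mem_convexHull_pair_neg hx
  exact ⟨k, (hg.inner hf).div (hf.norm.pow_const 2), hk.mono fun x hx => hx.1,
    integral_congr_ae (hk.mono fun x hx => hx.2)⟩

lemma subset_aumannIntegral_convexHull_pair_neg (hf : Measurable f) (hfi : Integrable f μ) :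
    {y | ∃ k : Ω → ℝ, Measurable k ∧ (∀ᵐ x ∂μ, |k x| ≤ 1) ∧ ∫ x, k x • f x ∂μ = y} ⊆
      AumannIntegral μ (fun x => convexHull ℝ {f x, -f x}) := by
  rintro _ ⟨k, hk, hk_le, rfl⟩
  exact ⟨fun x => k x • f x, hk.smul hf,
    hfi.bdd_smul 1 hk.aestronglyMeasurable (by simpa only [Real.norm_eq_abs] using hk_le),
    hk_le.mono fun x hx => mem_convexHull_pair_neg_iff.2 ⟨k x, hx, rfl⟩, rfl⟩

end

theorem aumann_integral_segment_general {Ω : Type*} [MeasurableSpace Ω] (μ : Measure Ω)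
    (f : Ω → EuclideanSpace ℝ (Fin d)) (hf : Measurable f) (hfi : Integrable f μ) :
    SetValuedMeasurable (fun x => convexHull ℝ {f x, -f x}) ∧
    IntegrablyBounded μ (fun x => convexHull ℝ {f x, -f x}) ∧
    AumannIntegral μ (fun x => convexHull ℝ {f x, -f x}) =
      {y | ∃ k : Ω → ℝ, Measurable k ∧ (∀ᵐ x ∂μ, |k x| ≤ 1) ∧
        ∫ x, k x • f x ∂μ = y} :=
  ⟨setValuedMeasurable_convexHull_pair_neg hf, integrablyBounded_convexHull_pair_neg hfi,
    (aumannIntegral_convexHull_pair_neg_subset hf).antisymm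
      (subset_aumannIntegral_convexHull_pair_neg hf hfi)⟩

/-- For `f ∈ L¹(Ω, ℝ^d)`, the map `F x = conv{f x, -f x}` is measurable and integrably
bounded, and its Aumann integral is `{∫ k f dμ : k ∈ L^∞, ‖k‖_∞ ≤ 1}`. -/
theorem aumann_integral_segment {Ω : Type*} [MeasurableSpace Ω] (μ : Measure Ω)
    [SigmaFinite μ] (hcompl : μ.IsComplete)
    (f : Ω → EuclideanSpace ℝ (Fin d)) (hf : Measurable f) (hfi : Integrable f μ) :
    SetValuedMeasurable (fun x => convexHull ℝ {f x, -f x}) ∧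
    IntegrablyBounded μ (fun x => convexHull ℝ {f x, -f x}) ∧
    AumannIntegral μ (fun x => convexHull ℝ {f x, -f x}) =
      {y | ∃ k : Ω → ℝ, Measurable k ∧ (∀ᵐ x ∂μ, |k x| ≤ 1) ∧
        ∫ x, k x • f x ∂μ = y} :=
  aumann_integral_segment_general μ f hf hfi
end

section
/- If F₁, F₂ : Ω → 𝒦_{bcs}(ℝ^d) are measurable and integrably bounded, then the set of integrable selections satisfies S¹(Ω, F₁+F₂) = S¹(Ω, F₁) + S¹(Ω, F₂), where F₁+F₂ denotes the pointwise Minkowski sum. -/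
open MeasureTheory
open scoped Pointwise

variable {d : ℕ}

/-- The set `S¹(Ω, F)` of integrable measurable selections of `F`. -/
def Sel1 {Ω : Type*} [MeasurableSpace Ω] (μ : Measure Ω)
    (F : Ω → Set (EuclideanSpace ℝ (Fin d))) : Set (Ω → EuclideanSpace ℝ (Fin d)) :=
  {g | Measurable g ∧ Integrable g μ ∧ ∀ᵐ x ∂μ, g x ∈ F x}

/-!
The inclusion `⊇` is immediate. Conversely, let `g ∈ S¹(F₁ + F₂)`. On a measurable set `A` of
full measure, `Φ x = {w ∈ F₁ x | g x - w ∈ F₂ x}` is nonempty, compact and convex, and it is the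
zero set of the Carathéodory function `w ↦ infDist w (F₁ x) + infDist (g x - w) (F₂ x)`. By strict
convexity of the Euclidean norm, `Φ x` has a unique point of least norm; it is the pointwise limit
of measurable approximate minimizers picked from a dense sequence, hence a measurable selection
`f₁` of `Φ`. Then `g = f₁ + (g - f₁)`, and `f₁` is integrable because `F₁` is integrably bounded.
-/

open Filter Metric Topology
open scoped ENNReal

section CaratheodoryDistance

variable {Ω E : Type*} [MeasurableSpace Ω]

theorem measurable_infEDist_of_measurableSet_inter_nonempty [PseudoMetricSpace E] {F : Ω → Set E}
    (hF : ∀ U : Set E, IsOpen U → MeasurableSet {x | (F x ∩ U).Nonempty}) (v : E) :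
    Measurable fun x => infEDist v (F x) := by
  refine measurable_of_Iio fun r => ?_
  convert hF _ (isOpen_eball (x := v) (ε := r)) using 1
  ext x
  simp [infEDist_lt_iff, Set.Nonempty, mem_eball, edist_comm]

theorem measurable_infDist_of_measurableSet_inter_nonempty [MetricSpace E]
    [SecondCountableTopology E] [MeasurableSpace E] [BorelSpace E] {F : Ω → Set E}
    (hF : ∀ U : Set E, IsOpen U → MeasurableSet {x | (F x ∩ U).Nonempty})
    {w : Ω → E} (hw : Measurable w) :
    Measurable fun x => infDist (w x) (F x) := by
  have hjoint : Measurable (Function.uncurry fun v x => infDist v (F x)) :=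
    measurable_uncurry_of_continuous_of_measurable (fun _ => continuous_infDist_pt _)
      fun v => (measurable_infEDist_of_measurableSet_inter_nonempty hF v).ennreal_toReal
  exact hjoint.comp (f := fun x => (w x, x)) (hw.prodMk measurable_id)

end CaratheodoryDistance

section MinNormSelection

variable {Ω E : Type*} [MeasurableSpace Ω] [NormedAddCommGroup E]

theorem IsMinOn.eq_of_norm_le [NormedSpace ℝ E] [StrictConvexSpace ℝ E] {s : Set E}
    (hs : Convex ℝ s) {p q : E} (hp : p ∈ s) (hpmin : IsMinOn norm s p) (hq : q ∈ s)
    (hqp : ‖q‖ ≤ ‖p‖) : q = p := by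
  by_contra hne
  have hmid : (1 / 2 : ℝ) • q + (1 / 2 : ℝ) • p ∈ s :=
    hs hq hp (by norm_num) (by norm_num) (by norm_num)
  exact (hpmin hmid).not_gt
    (norm_combo_lt_of_ne hqp le_rfl hne (by norm_num) (by norm_num) (by norm_num))

theorem tendsto_of_isMinOn_norm [NormedSpace ℝ E] [StrictConvexSpace ℝ E] [ProperSpace E]
    {f : E → ℝ} (hf : Continuous f) (hconv : Convex ℝ {w | f w ≤ 0}) {p : E} (hp : f p ≤ 0)
    (hpmin : IsMinOn norm {w | f w ≤ 0} p) {v : ℕ → E} {ε : ℕ → ℝ}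
    (hε : Tendsto ε atTop (𝓝 0)) (hv : ∀ k, f (v k) ≤ ε k ∧ ‖v k‖ ≤ ‖p‖ + ε k) :
    Tendsto v atTop (𝓝 p) := by
  refine (isCompact_closedBall (0 : E) (‖p‖ + 1)).tendsto_nhds_of_unique_mapClusterPt ?_ ?_
  · filter_upwards [hε.eventually (gt_mem_nhds one_pos)] with k hk
    simpa using (hv k).2.trans (by linarith)
  · intro q _ hq
    obtain ⟨φ, hφ_mono, hφ⟩ := hq.tendsto_subseq
    have hεφ : Tendsto (ε ∘ φ) atTop (𝓝 0) := hε.comp hφ_mono.tendsto_atTop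
    have hfq : f q ≤ 0 :=
      le_of_tendsto_of_tendsto' ((hf.tendsto q).comp hφ) hεφ fun k => (hv (φ k)).1
    have hnq : ‖q‖ ≤ ‖p‖ := by
      simpa using le_of_tendsto_of_tendsto' ((continuous_norm.tendsto q).comp hφ)
        (tendsto_const_nhds.add hεφ) fun k => (hv (φ k)).2
    exact hpmin.eq_of_norm_le hconv hp hfq hnq

theorem exists_measurable_approx_minNorm [MeasurableSpace E] [TopologicalSpace.SeparableSpace E]
    {c : Ω → E → ℝ} (hc_meas : ∀ w, Measurable fun x => c x w) (hc_cont : ∀ x, Continuous (c x))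
    (hZ : ∀ x, ∃ w, c x w ≤ 0) {ε : ℝ} (hε : 0 < ε) :
    ∃ v : Ω → E, Measurable v ∧ ∀ x, c x (v x) < ε ∧ ∀ w, c x w ≤ 0 → ‖v x‖ ≤ ‖w‖ + 2 * ε := by
  classical
  obtain ⟨u, hu⟩ := TopologicalSpace.exists_dense_seq E
  have hnear : ∀ x w, c x w ≤ 0 → ∃ n, c x (u n) < ε ∧ ‖u n‖ ≤ ‖w‖ + ε := by
    intro x w hw
    obtain ⟨n, hn, hnw⟩ := hu.exists_mem_open
      ((isOpen_lt (hc_cont x) continuous_const).inter isOpen_ball)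
      ⟨w, hw.trans_lt hε, mem_ball_self hε⟩
    refine ⟨n, hn, ?_⟩
    have := norm_le_norm_add_norm_sub' (u n) w
    rw [mem_ball, dist_eq_norm] at hnw
    linarith
  let m : Ω → ℝ≥0∞ := fun x => ⨅ n, if c x (u n) < ε then ‖u n‖ₑ else ⊤
  have hm_meas : Measurable m := Measurable.iInf fun n =>
    Measurable.ite (measurableSet_lt (hc_meas _) measurable_const) measurable_const measurable_const
  have hm_le : ∀ x w, c x w ≤ 0 → m x ≤ ENNReal.ofReal (‖w‖ + ε) := by
    intro x w hw
    obtain ⟨n, hn, hnorm⟩ := hnear x w hw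
    refine (iInf_le _ n).trans ?_
    rw [if_pos hn, ← ofReal_norm]
    exact ENNReal.ofReal_le_ofReal hnorm
  let P : Ω → ℕ → Prop := fun x n => c x (u n) < ε ∧ ‖u n‖ₑ < m x + ENNReal.ofReal ε
  have hP : ∀ x, ∃ n, P x n := by
    intro x
    obtain ⟨w, hw⟩ := hZ x
    have hm_lt : m x < m x + ENNReal.ofReal ε :=
      ENNReal.lt_add_right ((hm_le x w hw).trans_lt ENNReal.ofReal_lt_top).ne (by simpa using hε)
    obtain ⟨n, hn⟩ := iInf_lt_iff.mp hm_lt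
    by_cases hcn : c x (u n) < ε
    · exact ⟨n, hcn, by rwa [if_pos hcn] at hn⟩
    · rw [if_neg hcn] at hn
      exact absurd hn not_top_lt
  have hP_meas : ∀ n, MeasurableSet {x | P x n} := fun n =>
    (measurableSet_lt (hc_meas _) measurable_const).inter
      (measurableSet_lt measurable_const (hm_meas.add measurable_const))
  refine ⟨fun x => u (Nat.find (hP x)), measurable_from_nat.comp (measurable_find hP hP_meas),
    fun x => ⟨(Nat.find_spec (hP x)).1, fun w hw => ?_⟩⟩
  have hlt := (Nat.find_spec (hP x)).2.trans_le (add_le_add_left (hm_le x w hw) _)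
  rw [← ENNReal.ofReal_add (by positivity) hε.le, ← ofReal_norm,
    ENNReal.ofReal_lt_ofReal_iff (by positivity)] at hlt
  linarith

theorem exists_measurable_selection_of_convex_sublevel [NormedSpace ℝ E] [StrictConvexSpace ℝ E]
    [ProperSpace E] [MeasurableSpace E] [BorelSpace E] {c : Ω → E → ℝ}
    (hc_meas : ∀ w, Measurable fun x => c x w) (hc_cont : ∀ x, Continuous (c x))
    (hZ : ∀ x, ∃ w, c x w ≤ 0) (hZ_bdd : ∀ x, Bornology.IsBounded {w | c x w ≤ 0})
    (hZ_conv : ∀ x, Convex ℝ {w | c x w ≤ 0}) :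
    ∃ s : Ω → E, Measurable s ∧ ∀ x, c x (s x) ≤ 0 := by
  choose v hv_meas hv using fun k : ℕ =>
    exists_measurable_approx_minNorm hc_meas hc_cont hZ (Nat.one_div_pos_of_nat (n := k))
  choose s hs hs_min using fun x =>
    (isCompact_of_isClosed_isBounded (isClosed_le (hc_cont x) continuous_const)
      (hZ_bdd x)).exists_isMinOn (hZ x) continuous_norm.continuousOn
  have hε : Tendsto (fun k : ℕ => 2 * (1 / ((k : ℝ) + 1))) atTop (𝓝 0) := by
    simpa using tendsto_one_div_add_atTop_nhds_zero_nat.const_mul (2 : ℝ)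
  refine ⟨s, measurable_of_tendsto_metrizable hv_meas (tendsto_pi_nhds.2 fun x => ?_), hs⟩
  refine tendsto_of_isMinOn_norm (hc_cont x) (hZ_conv x) (hs x) (hs_min x) hε fun k => ⟨?_, ?_⟩
  · have : (0 : ℝ) < 1 / ((k : ℝ) + 1) := Nat.one_div_pos_of_nat
    linarith [(hv k x).1]
  · exact (hv k x).2 _ (hs x)

theorem exists_measurable_selection_on_of_convex_sublevel [NormedSpace ℝ E]
    [StrictConvexSpace ℝ E] [ProperSpace E] [MeasurableSpace E] [BorelSpace E] {c : Ω → E → ℝ}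
    (hc_meas : ∀ w, Measurable fun x => c x w) (hc_cont : ∀ x, Continuous (c x))
    {A : Set Ω} (hA : MeasurableSet A) (hZ : ∀ x ∈ A, ∃ w, c x w ≤ 0)
    (hZ_bdd : ∀ x ∈ A, Bornology.IsBounded {w | c x w ≤ 0})
    (hZ_conv : ∀ x ∈ A, Convex ℝ {w | c x w ≤ 0}) :
    ∃ s : Ω → E, Measurable s ∧ ∀ x ∈ A, c x (s x) ≤ 0 := by
  classical
  have hzero : {w : E | ‖w‖ ≤ 0} = {0} := by
    ext w
    simp
  obtain ⟨s, hs, hsc⟩ := exists_measurable_selection_of_convex_sublevel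
    (c := fun x w => if x ∈ A then c x w else ‖w‖)
    (fun w => Measurable.ite hA (hc_meas w) measurable_const)
    (fun x => by
      by_cases hx : x ∈ A <;> simp only [hx, if_true, if_false, hc_cont, continuous_norm])
    (fun x => by
      by_cases hx : x ∈ A
      · simpa only [hx, if_true] using hZ x hx
      · exact ⟨0, by simp [hx]⟩)
    (fun x => by
      by_cases hx : x ∈ A
      · simpa only [hx, if_true] using hZ_bdd x hx
      · simpa only [hx, if_false, hzero] using Bornology.isBounded_singleton)
    (fun x => by
      by_cases hx : x ∈ A
      · simpa only [hx, if_true] using hZ_conv x hx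
      · simpa only [hx, if_false, hzero] using convex_singleton (0 : E))
  exact ⟨s, hs, fun x hx => by simpa only [hx, if_true] using hsc x⟩

end MinNormSelection

theorem infDist_add_infDist_nonpos_iff {E : Type*} [PseudoMetricSpace E] {S T : Set E}
    (hS : IsClosed S) (hS_ne : S.Nonempty) (hT : IsClosed T) (hT_ne : T.Nonempty) {a b : E} :
    infDist a S + infDist b T ≤ 0 ↔ a ∈ S ∧ b ∈ T := by
  rw [hS.mem_iff_infDist_zero hS_ne, hT.mem_iff_infDist_zero hT_ne]
  have := infDist_nonneg (x := a) (s := S)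
  have := infDist_nonneg (x := b) (s := T)
  constructor
  · intro h
    constructor <;> linarith
  · rintro ⟨ha, hb⟩
    linarith

theorem exists_measurable_add_decomposition {Ω E : Type*} [MeasurableSpace Ω]
    [NormedAddCommGroup E] [NormedSpace ℝ E] [StrictConvexSpace ℝ E] [ProperSpace E]
    [MeasurableSpace E] [BorelSpace E]
    {F₁ F₂ : Ω → Set E} (hc₁ : ∀ x, Convex ℝ (F₁ x)) (hcl₁ : ∀ x, IsClosed (F₁ x))
    (hF₁ : ∀ U : Set E, IsOpen U → MeasurableSet {x | (F₁ x ∩ U).Nonempty})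
    (hc₂ : ∀ x, Convex ℝ (F₂ x)) (hcl₂ : ∀ x, IsClosed (F₂ x))
    (hF₂ : ∀ U : Set E, IsOpen U → MeasurableSet {x | (F₂ x ∩ U).Nonempty})
    {g : Ω → E} (hg : Measurable g) {A : Set Ω} (hA : MeasurableSet A)
    (hgA : ∀ x ∈ A, g x ∈ F₁ x + F₂ x) (hbA : ∀ x ∈ A, Bornology.IsBounded (F₁ x)) :
    ∃ s : Ω → E, Measurable s ∧ ∀ x ∈ A, s x ∈ F₁ x ∧ g x - s x ∈ F₂ x := by
  let c : Ω → E → ℝ := fun x w => infDist w (F₁ x) + infDist (g x - w) (F₂ x)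
  have hZ : ∀ x ∈ A, {w | c x w ≤ 0} = F₁ x ∩ {w | g x - w ∈ F₂ x} := by
    intro x hx
    obtain ⟨a, ha, b, hb, -⟩ := hgA x hx
    ext w
    exact infDist_add_infDist_nonpos_iff (hcl₁ x) ⟨a, ha⟩ (hcl₂ x) ⟨b, hb⟩
  have hsub_conv : ∀ x, Convex ℝ {w | g x - w ∈ F₂ x} := by
    intro x
    have hsub : {w | g x - w ∈ F₂ x} = -((fun w => g x + w) ⁻¹' F₂ x) := by
      ext w
      simp [sub_eq_add_neg]
    rw [hsub]
    exact ((hc₂ x).translate_preimage_right (g x)).neg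
  obtain ⟨s, hs, hsc⟩ := exists_measurable_selection_on_of_convex_sublevel (c := c)
    (fun w => (measurable_infDist_of_measurableSet_inter_nonempty hF₁ measurable_const).add
      (measurable_infDist_of_measurableSet_inter_nonempty hF₂ (hg.sub measurable_const)))
    (fun x => (continuous_infDist_pt _).add
      ((continuous_infDist_pt _).comp (continuous_const.sub continuous_id)))
    hA
    (fun x hx => by
      obtain ⟨a, ha, b, hb, hab⟩ := hgA x hx
      refine ⟨a, (Set.ext_iff.mp (hZ x hx) a).2 ⟨ha, ?_⟩⟩
      simpa [← hab] using hb)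
    (fun x hx => hZ x hx ▸ (hbA x hx).subset Set.inter_subset_left)
    (fun x hx => hZ x hx ▸ (hc₁ x).inter (hsub_conv x))
  exact ⟨s, hs, fun x hx => (Set.ext_iff.mp (hZ x hx) (s x)).1 (hsc x hx)⟩

theorem sel1_add_sel1_subset {Ω : Type*} [MeasurableSpace Ω] (μ : Measure Ω)
    (F₁ F₂ : Ω → Set (EuclideanSpace ℝ (Fin d))) :
    Sel1 μ F₁ + Sel1 μ F₂ ⊆ Sel1 μ (fun x => F₁ x + F₂ x) := by
  rintro _ ⟨g₁, ⟨h₁_meas, h₁_int, h₁_mem⟩, g₂, ⟨h₂_meas, h₂_int, h₂_mem⟩, rfl⟩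
  refine ⟨h₁_meas.add h₂_meas, h₁_int.add h₂_int, ?_⟩
  filter_upwards [h₁_mem, h₂_mem] with x h₁ h₂ using Set.add_mem_add h₁ h₂

theorem selections_additive_general {Ω : Type*} [MeasurableSpace Ω]
    (μ : Measure Ω)
    (F₁ F₂ : Ω → Set (EuclideanSpace ℝ (Fin d)))
    (hc₁ : ∀ x, Convex ℝ (F₁ x))
    (hcl₁ : ∀ x, IsClosed (F₁ x)) (hF₁ : SetValuedMeasurable F₁)
    (hib₁ : IntegrablyBounded μ F₁)
    (hc₂ : ∀ x, Convex ℝ (F₂ x))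
    (hcl₂ : ∀ x, IsClosed (F₂ x)) (hF₂ : SetValuedMeasurable F₂) :
    Sel1 μ (fun x => F₁ x + F₂ x) = Sel1 μ F₁ + Sel1 μ F₂ := by
  refine Set.Subset.antisymm ?_ (sel1_add_sel1_subset μ F₁ F₂)
  rintro g ⟨hg_meas, hg_int, hg_mem⟩
  obtain ⟨k, -, hk_int, hk⟩ := hib₁
  obtain ⟨A, hA_ae, hA, hgA⟩ := (hg_mem.and hk).exists_measurable_mem
  obtain ⟨s, hs_meas, hs⟩ :=
    exists_measurable_add_decomposition hc₁ hcl₁ hF₁ hc₂ hcl₂ hF₂ hg_meas hA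
      (fun x hx => (hgA x hx).1) fun x hx => isBounded_closedBall.subset (hgA x hx).2
  have hs_int : Integrable s μ := by
    refine hk_int.mono' hs_meas.aestronglyMeasurable ?_
    filter_upwards [hA_ae] with x hx
    simpa using (hgA x hx).2 (hs x hx).1
  refine ⟨s, ⟨hs_meas, hs_int, ?_⟩, g - s, ⟨hg_meas.sub hs_meas, hg_int.sub hs_int, ?_⟩,
    add_sub_cancel _ _⟩
  · filter_upwards [hA_ae] with x hx using (hs x hx).1
  · filter_upwards [hA_ae] with x hx using (hs x hx).2

/-- If `F₁, F₂` are measurable and integrably bounded maps into bounded, convex,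
symmetric, closed nonempty sets, then `S¹(Ω, F₁+F₂) = S¹(Ω, F₁) + S¹(Ω, F₂)`. -/
theorem selections_additive {Ω : Type*} [MeasurableSpace Ω]
    (μ : Measure Ω) [SigmaFinite μ] (hcompl : μ.IsComplete)
    (F₁ F₂ : Ω → Set (EuclideanSpace ℝ (Fin d)))
    (hne₁ : ∀ x, (F₁ x).Nonempty) (hb₁ : ∀ x, Bornology.IsBounded (F₁ x))
    (hc₁ : ∀ x, Convex ℝ (F₁ x)) (hs₁ : ∀ x, ∀ v ∈ F₁ x, -v ∈ F₁ x)
    (hcl₁ : ∀ x, IsClosed (F₁ x)) (hF₁ : SetValuedMeasurable F₁)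
    (hib₁ : IntegrablyBounded μ F₁)
    (hne₂ : ∀ x, (F₂ x).Nonempty) (hb₂ : ∀ x, Bornology.IsBounded (F₂ x))
    (hc₂ : ∀ x, Convex ℝ (F₂ x)) (hs₂ : ∀ x, ∀ v ∈ F₂ x, -v ∈ F₂ x)
    (hcl₂ : ∀ x, IsClosed (F₂ x)) (hF₂ : SetValuedMeasurable F₂)
    (hib₂ : IntegrablyBounded μ F₂) :
    Sel1 μ (fun x => F₁ x + F₂ x) = Sel1 μ F₁ + Sel1 μ F₂ :=
  selections_additive_general μ F₁ F₂ hc₁ hcl₁ hF₁ hib₁ hc₂ hcl₂ hF₂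
end

section
/- Let F : Ω → 𝒦_{bcs}(ℝ^d) be measurable. Then ∫_Ω F dμ = {0} if and only if F(x) = {0} for a.e. x ∈ Ω. -/
open MeasureTheory

variable {d : ℕ}

/-!
If `F x ≠ {0}` on a set of positive measure then, by symmetry and countability, there are a
coordinate vector `e`, a threshold `q > 0` and a radius `r` such that `F x ⊆ closedBall 0 r` and
`F x` contains a point with `⟪e, v⟫ > q` for all `x` in a set `B` of positive finite measure.
For `R` large, the point of `F x` nearest to `R • e` has `e`-component at least `q / 2`; it is
unique by convexity and measurable in `x`, because whether it lies in a closed set `C` only depends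
on which closed sets `F x` meets. Extended by `0 ∈ F x` outside `B`, it is an integrable selection
whose integral has positive `e`-component, so `∫ F dμ ≠ {0}`.
-/

open MeasureTheory Metric Set Filter
open scoped InnerProductSpace ENNReal

lemma Convex.zero_mem_of_neg_mem {E : Type*} [AddCommGroup E] [Module ℝ E] {s : Set E}
    (hs : Convex ℝ s) (hne : s.Nonempty) (hneg : ∀ v ∈ s, -v ∈ s) : (0 : E) ∈ s := by
  obtain ⟨v, hv⟩ := hne
  simpa using hs hv (hneg v hv) (by norm_num : (0 : ℝ) ≤ 1 / 2) (by norm_num : (0 : ℝ) ≤ 1 / 2)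
    (by norm_num)

section RealInnerProductSpace

variable {E : Type*} [NormedAddCommGroup E] [InnerProductSpace ℝ E]

/-- By the parallelogram law, two distinct nearest points would have a strictly closer midpoint. -/
lemma Convex.eq_of_isMinOn_dist {s : Set E} (hs : Convex ℝ s) {p u v : E} (hu : u ∈ s)
    (hv : v ∈ s) (hmu : IsMinOn (dist p) s u) (hmv : IsMinOn (dist p) s v) : u = v := by
  set m : E := (1 / 2 : ℝ) • u + (1 / 2 : ℝ) • v
  have hm : m ∈ s := hs hu hv (by norm_num) (by norm_num) (by norm_num)
  have hum : ‖p - u‖ ≤ ‖p - m‖ := by simpa only [dist_eq_norm] using isMinOn_iff.1 hmu m hm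
  have hvm : ‖p - v‖ ≤ ‖p - m‖ := by simpa only [dist_eq_norm] using isMinOn_iff.1 hmv m hm
  have hpar := parallelogram_law_with_norm ℝ (p - u) (p - v)
  rw [show p - u + (p - v) = (2 : ℝ) • (p - m) by module, show p - u - (p - v) = v - u by abel,
    norm_smul, Real.norm_ofNat] at hpar
  have : ‖v - u‖ = 0 := by
    nlinarith [norm_nonneg (v - u), norm_nonneg (p - u), norm_nonneg (p - v)]
  exact (sub_eq_zero.1 (norm_eq_zero.1 this)).symm

/-- Expanding `‖R • e - u‖² ≤ ‖R • e - v‖²` gives `2R⟪e, u⟫ ≥ 2R⟪e, v⟫ - ‖v‖² > 2Rq - qR`. -/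
lemma le_inner_of_isMinOn_dist_smul {s : Set E} {e u v : E} {q r R : ℝ} (hR : 0 < R)
    (hrR : r ^ 2 ≤ q * R) (hv : v ∈ s) (hvr : ‖v‖ ≤ r) (hqv : q < ⟪e, v⟫_ℝ)
    (hu : IsMinOn (dist (R • e)) s u) : q / 2 ≤ ⟪e, u⟫_ℝ := by
  have hdist : ‖R • e - u‖ ^ 2 ≤ ‖R • e - v‖ ^ 2 := by
    have := isMinOn_iff.1 hu v hv
    rw [dist_eq_norm, dist_eq_norm] at this
    gcongr
  rw [norm_sub_sq_real, norm_sub_sq_real, real_inner_smul_left, real_inner_smul_left] at hdist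
  have hv2 : ‖v‖ ^ 2 ≤ r ^ 2 := pow_le_pow_left₀ (norm_nonneg v) hvr 2
  nlinarith [sq_nonneg ‖u‖]

lemma mem_iff_forall_rat_inter_closedBall_nonempty {K C : Set E} (hK : IsCompact K)
    (hKc : Convex ℝ K) (hC : IsClosed C) {p u : E} (hu : u ∈ K) (hmin : IsMinOn (dist p) K u) :
    u ∈ C ↔ ∀ s : ℚ, infDist p K < s → (K ∩ (C ∩ closedBall p s)).Nonempty := by
  have hdist : infDist p K = dist p u :=
    le_antisymm (infDist_le_dist_of_mem hu) ((le_infDist ⟨u, hu⟩).2 (isMinOn_iff.1 hmin))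
  refine ⟨fun huC s hs => ⟨u, hu, huC, ?_⟩, fun h => ?_⟩
  · rw [mem_closedBall, dist_comm]
    exact (hdist ▸ hs).le
  obtain ⟨s₀, hs₀⟩ := exists_rat_gt (infDist p K)
  have hKC : (K ∩ C).Nonempty :=
    (h s₀ hs₀).mono (inter_subset_inter_right K inter_subset_left)
  obtain ⟨a, ⟨haK, haC⟩, ha⟩ := (hK.inter_right hC).exists_infDist_eq_dist hKC p
  have hpa : dist p a ≤ infDist p K := by
    refine le_of_forall_lt_rat_imp_le fun s hs => ?_
    obtain ⟨w, hwK, hwC, hws⟩ := h s hs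
    rw [mem_closedBall, dist_comm] at hws
    rw [← ha]
    exact (infDist_le_dist_of_mem (mem_inter hwK hwC)).trans hws
  have hamin : IsMinOn (dist p) K a :=
    isMinOn_iff.2 fun w hw => hpa.trans (infDist_le_dist_of_mem hw)
  exact hKc.eq_of_isMinOn_dist haK hu hamin hmin ▸ haC

end RealInnerProductSpace

lemma EuclideanSpace.exists_subset_closedBall_inter_nonempty_of_ne_singleton_zero
    {s : Set (EuclideanSpace ℝ (Fin d))} (hb : Bornology.IsBounded s) (hneg : ∀ v ∈ s, -v ∈ s)
    (h0 : 0 ∈ s) (hs : s ≠ {0}) :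
    ∃ i : Fin d, ∃ m n : ℕ, s ⊆ closedBall 0 n ∧ (s ∩ {w | 1 / (m + 1) < w i}).Nonempty := by
  obtain ⟨v, hv, hv0⟩ : ∃ v ∈ s, v ≠ 0 := by
    by_contra! h
    exact hs (eq_singleton_iff_unique_mem.2 ⟨h0, h⟩)
  obtain ⟨i, hi⟩ : ∃ i, v i ≠ 0 := by
    by_contra! h
    exact hv0 (by ext i; simpa using h i)
  obtain ⟨w, hw, hwi⟩ : ∃ w ∈ s, 0 < w i := by
    rcases hi.lt_or_gt with h | h
    · exact ⟨-v, hneg v hv, by simpa using h⟩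
    · exact ⟨v, hv, h⟩
  obtain ⟨m, hm⟩ := exists_nat_one_div_lt hwi
  obtain ⟨r, hsr⟩ := hb.subset_closedBall 0
  obtain ⟨n, hn⟩ := exists_nat_ge r
  exact ⟨i, m, n, hsr.trans (closedBall_subset_closedBall hn), w, hw, hm⟩

section SetValued

variable {Ω : Type*} [MeasurableSpace Ω] {F : Ω → Set (EuclideanSpace ℝ (Fin d))}

namespace SetValuedMeasurable

lemma measurableSet_inter_nonempty_of_isClosed (hF : SetValuedMeasurable F)
    (hK : ∀ x, IsCompact (F x)) {C : Set (EuclideanSpace ℝ (Fin d))} (hC : IsClosed C) :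
    MeasurableSet {x | (F x ∩ C).Nonempty} := by
  have hiInter : {x | (F x ∩ C).Nonempty} =
      ⋂ n : ℕ, {x | (F x ∩ thickening (1 / (n + 1)) C).Nonempty} := by
    ext x
    simp only [mem_ofPred_eq, mem_iInter]
    refine ⟨fun h n => h.mono (inter_subset_inter_right _ (self_subset_thickening
      (by positivity) C)), fun h => ?_⟩
    by_contra hdisj
    obtain ⟨δ, hδ, hsep⟩ := (disjoint_iff_inter_eq_empty.2
      (not_nonempty_iff_eq_empty.1 hdisj)).exists_thickenings (hK x) hC
    obtain ⟨n, hn⟩ := exists_nat_one_div_lt hδ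
    obtain ⟨w, hwF, hwC⟩ := h n
    exact hsep.ne_of_mem (self_subset_thickening hδ _ hwF)
      (thickening_mono hn.le C hwC) rfl
  rw [hiInter]
  exact MeasurableSet.iInter fun n => hF _ isOpen_thickening

lemma measurable_infDist (hF : SetValuedMeasurable F) (hne : ∀ x, (F x).Nonempty)
    (p : EuclideanSpace ℝ (Fin d)) : Measurable fun x => infDist p (F x) := by
  refine measurable_of_Iio fun t => ?_
  have hball : (fun x => infDist p (F x)) ⁻¹' Iio t = {x | (F x ∩ ball p t).Nonempty} := by
    ext x
    simp only [mem_preimage, mem_Iio, mem_ofPred_eq, infDist_lt_iff (hne x), dist_comm p]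
    rfl
  rw [hball]
  exact hF _ isOpen_ball

lemma measurable_of_isMinOn_dist (hF : SetValuedMeasurable F) (hK : ∀ x, IsCompact (F x))
    (hc : ∀ x, Convex ℝ (F x)) {p : EuclideanSpace ℝ (Fin d)}
    {P : Ω → EuclideanSpace ℝ (Fin d)} (hP : ∀ x, P x ∈ F x)
    (hmin : ∀ x, IsMinOn (dist p) (F x) (P x)) : Measurable P := by
  refine measurable_of_isClosed fun C hC => ?_
  have hiInter : P ⁻¹' C = ⋂ s : ℚ, ({x | (s : ℝ) ≤ infDist p (F x)} ∪
      {x | (F x ∩ (C ∩ closedBall p s)).Nonempty}) := by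
    ext x
    simp only [mem_preimage, mem_iInter, mem_union, mem_ofPred_eq,
      mem_iff_forall_rat_inter_closedBall_nonempty (hK x) (hc x) hC (hP x) (hmin x),
      ← not_lt, imp_iff_not_or]
  rw [hiInter]
  exact MeasurableSet.iInter fun s =>
    (measurableSet_le measurable_const (hF.measurable_infDist (fun x => ⟨P x, hP x⟩) p)).union
      (hF.measurableSet_inter_nonempty_of_isClosed hK (hC.inter isClosed_closedBall))

lemma exists_mem_aumannIntegral_inner_pos {μ : Measure Ω} (hF : SetValuedMeasurable F)
    (hK : ∀ x, IsCompact (F x)) (hc : ∀ x, Convex ℝ (F x)) (h0 : ∀ x, 0 ∈ F x) {B : Set Ω}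
    (hB : MeasurableSet B) (hμB : μ B ≠ 0) (hμB' : μ B ≠ ∞) {e : EuclideanSpace ℝ (Fin d)}
    {q r : ℝ} (hq : 0 < q) (hBF : ∀ x ∈ B, F x ⊆ closedBall 0 r ∧ ∃ v ∈ F x, q < ⟪e, v⟫_ℝ) :
    ∃ y ∈ AumannIntegral μ F, 0 < ⟪e, y⟫_ℝ := by
  set R := r ^ 2 / q + 1
  have hR : 0 < R := by positivity
  have hrR : r ^ 2 ≤ q * R := by
    rw [mul_add, mul_div_cancel₀ _ hq.ne']
    linarith
  choose P hPF hPmin using fun x =>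
    (hK x).exists_isMinOn ⟨0, h0 x⟩ (continuous_const.dist continuous_id).continuousOn
      (f := dist (R • e))
  have hPmeas : Measurable P := hF.measurable_of_isMinOn_dist hK hc hPF hPmin
  have hPe : ∀ x ∈ B, q / 2 ≤ ⟪e, P x⟫_ℝ := fun x hx =>
    let ⟨hFr, _, hv, hqv⟩ := hBF x hx
    le_inner_of_isMinOn_dist_smul hR hrR hv (mem_closedBall_zero_iff.1 (hFr hv)) hqv (hPmin x)
  have hPint : IntegrableOn P B μ :=
    Measure.integrableOn_of_bounded hμB' hPmeas.aestronglyMeasurable <| (ae_restrict_iff' hB).2 <|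
      ae_of_all _ fun x hx => mem_closedBall_zero_iff.1 ((hBF x hx).1 (hPF x))
  refine ⟨∫ x, B.indicator P x ∂μ, ⟨B.indicator P, hPmeas.indicator hB,
    (integrable_indicator_iff hB).2 hPint, ae_of_all _ fun x => ?_, rfl⟩, ?_⟩
  · by_cases hx : x ∈ B <;> simp [hx, hPF, h0]
  · rw [integral_indicator hB, ← integral_inner hPint]
    calc 0 < q / 2 * μ.real B := by
          have := ENNReal.toReal_pos hμB hμB'
          positivity
      _ ≤ ∫ x in B, ⟪e, P x⟫_ℝ ∂μ :=
          setIntegral_ge_of_const_le_real hB hμB' hPe (hPint.const_inner e)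

lemma ae_eq_singleton_zero_of_aumannIntegral_subset {μ : Measure Ω} [SigmaFinite μ]
    (hF : SetValuedMeasurable F) (hK : ∀ x, IsCompact (F x)) (hc : ∀ x, Convex ℝ (F x))
    (hneg : ∀ x, ∀ v ∈ F x, -v ∈ F x) (h0 : ∀ x, 0 ∈ F x) (hA : AumannIntegral μ F ⊆ {0}) :
    ∀ᵐ x ∂μ, F x = {0} := by
  set S : Fin d → ℕ → ℕ → Set Ω := fun i m n =>
    {x | F x ⊆ closedBall 0 n} ∩ {x | (F x ∩ {w | 1 / (m + 1) < w i}).Nonempty}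
  have hSmeas : ∀ i m n, MeasurableSet (S i m n) := fun i m n => by
    refine MeasurableSet.inter ?_ (hF _ (isOpen_lt continuous_const
      ((EuclideanSpace.proj i).continuous)))
    convert (hF _ (isClosed_closedBall (x := (0 : EuclideanSpace ℝ (Fin d)))
      (ε := n)).isOpen_compl).compl using 1
    ext x
    simp only [mem_compl_iff, mem_ofPred_eq, inter_compl_nonempty_iff, not_not]
  have hSnull : ∀ i m n, μ (S i m n) = 0 := fun i m n => by
    by_contra hS
    obtain ⟨B, hB, hBS, hμB, hμB'⟩ :=
      Measure.exists_subset_measure_lt_top (hSmeas i m n) (pos_iff_ne_zero.2 hS)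
    obtain ⟨y, hy, hpos⟩ := hF.exists_mem_aumannIntegral_inner_pos hK hc h0 hB hμB.ne' hμB'.ne
      (e := EuclideanSpace.single i 1) (by positivity : (0 : ℝ) < 1 / (m + 1))
      fun x hx => by
        obtain ⟨hFn, v, hv, hvi⟩ := hBS hx
        exact ⟨hFn, v, hv, by simpa [EuclideanSpace.inner_single_left] using hvi⟩
    rw [mem_singleton_iff.1 (hA hy), inner_zero_right] at hpos
    exact hpos.false
  rw [ae_iff]
  refine measure_mono_null (fun x hx => ?_) (measure_iUnion_null fun i =>
    measure_iUnion_null fun m => measure_iUnion_null fun n => hSnull i m n)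
  obtain ⟨i, m, n, hFn, hFi⟩ :=
    EuclideanSpace.exists_subset_closedBall_inter_nonempty_of_ne_singleton_zero (hK x).isBounded
      (hneg x) (h0 x) hx
  simp only [mem_iUnion]
  exact ⟨i, m, n, hFn, hFi⟩

end SetValuedMeasurable

lemma aumannIntegral_congr_ae {μ : Measure Ω} {G : Ω → Set (EuclideanSpace ℝ (Fin d))}
    (h : ∀ᵐ x ∂μ, F x = G x) : AumannIntegral μ F = AumannIntegral μ G := by
  ext y
  refine exists_congr fun g => and_congr_right' <| and_congr_right' <| and_congr_left' ?_
  exact eventually_congr (h.mono fun x hx => by rw [hx])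

lemma aumannIntegral_singleton_zero (μ : Measure Ω) :
    AumannIntegral μ (fun _ => ({0} : Set (EuclideanSpace ℝ (Fin d)))) = {0} := by
  ext y
  refine ⟨fun ⟨g, _, _, hg, hy⟩ => ?_, fun hy => ⟨0, measurable_const, integrable_zero _ _ _,
    ae_of_all _ fun _ => rfl, hy ▸ integral_zero _ _⟩⟩
  rw [← hy, integral_congr_ae hg]
  exact integral_zero _ _

end SetValued

theorem aumann_integral_eq_zero_iff_general {Ω : Type*} [MeasurableSpace Ω]
    (μ : Measure Ω) [SigmaFinite μ]
    (F : Ω → Set (EuclideanSpace ℝ (Fin d)))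
    (hne : ∀ x, (F x).Nonempty) (hb : ∀ x, Bornology.IsBounded (F x))
    (hc : ∀ x, Convex ℝ (F x)) (hs : ∀ x, ∀ v ∈ F x, -v ∈ F x)
    (hcl : ∀ x, IsClosed (F x)) (hF : SetValuedMeasurable F) :
    AumannIntegral μ F = {0} ↔ ∀ᵐ x ∂μ, F x = {0} := by
  have h0 : ∀ x, (0 : EuclideanSpace ℝ (Fin d)) ∈ F x := fun x =>
    (hc x).zero_mem_of_neg_mem (hne x) (hs x)
  have hK : ∀ x, IsCompact (F x) := fun x => isCompact_of_isClosed_isBounded (hcl x) (hb x)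
  refine ⟨fun hA => hF.ae_eq_singleton_zero_of_aumannIntegral_subset hK hc hs h0 hA.subset,
    fun h => ?_⟩
  rw [aumannIntegral_congr_ae h, aumannIntegral_singleton_zero]

/-- For a measurable map `F` into bounded, convex, symmetric, closed nonempty sets,
`∫ F dμ = {0}` if and only if `F x = {0}` a.e. -/
theorem aumann_integral_eq_zero_iff {Ω : Type*} [MeasurableSpace Ω]
    (μ : Measure Ω) [SigmaFinite μ] (hcompl : μ.IsComplete)
    (F : Ω → Set (EuclideanSpace ℝ (Fin d)))
    (hne : ∀ x, (F x).Nonempty) (hb : ∀ x, Bornology.IsBounded (F x))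
    (hc : ∀ x, Convex ℝ (F x)) (hs : ∀ x, ∀ v ∈ F x, -v ∈ F x)
    (hcl : ∀ x, IsClosed (F x)) (hF : SetValuedMeasurable F) :
    AumannIntegral μ F = {0} ↔ ∀ᵐ x ∂μ, F x = {0} :=
  aumann_integral_eq_zero_iff_general μ F hne hb hc hs hcl hF
end

section
/- (Hölder's inequality for Aumann integrals) Let ρ be a norm on ℝ^d, 1 < p < ∞, H : Ω → 𝒦_{bcs}(ℝ^d) measurable, and f, g : Ω → [0,∞) measurable such that f^p H and g^{p'} H are integrably bounded. Then ρ(∫_Ω f g H dμ) ≤ ρ(∫_Ω f^p H dμ)^{1/p} · ρ(∫_Ω g^{p'} H dμ)^{1/p'}, where ρ(K) = sup{ρ(v) : v ∈ K} and 1/p + 1/p' = 1. -/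
/-!
Let `y = ∫ h` with `h x ∈ f x g x • H x`. By Hahn–Banach there is a linear functional `ℓ ≤ ρ`
with `ℓ y = ρ y`, and since `H` is symmetric we may replace `h x` by `± h x` so that `ℓ ∘ h ≥ 0`;
then `ρ y ≤ ∫ ℓ ∘ h`. With `s = ℓ ∘ h / (f g)`, the maps `(f ^ p / (f g)) • h` and
`(g ^ q / (f g)) • h` are selections of `f ^ p H` and `g ^ q H` (here `0 ∈ H` by convexity), so
`∫ f ^ p s ≤ ρ(∫ f ^ p H)` and `∫ g ^ q s ≤ ρ(∫ g ^ q H)`. Since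
`ℓ ∘ h = f g s = (f ^ p s) ^ (1/p) (g ^ q s) ^ (1/q)`, scalar Hölder finishes the proof.
-/

open MeasureTheory
open scoped Pointwise

variable {d : ℕ}

/-- A norm as a plain function on ℝ^d. -/
def IsNormFun (p : EuclideanSpace ℝ (Fin d) → ℝ) : Prop :=
  (∀ u v, p (u + v) ≤ p u + p v) ∧ (∀ (a : ℝ) v, p (a • v) = |a| * p v) ∧
    (∀ v, p v = 0 → v = 0)

/-- `ρ(K) = sup {ρ(v) : v ∈ K}` for a bounded set `K`. -/
noncomputable def setNorm (ρ : EuclideanSpace ℝ (Fin d) → ℝ)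
    (K : Set (EuclideanSpace ℝ (Fin d))) : ℝ :=
  sSup (ρ '' K)

section General

variable {E : Type*} [AddCommGroup E] [Module ℝ E]

theorem Convex.zero_mem_of_neg_mem_s16 {S : Set E} (hc : Convex ℝ S) (hs : ∀ v ∈ S, -v ∈ S)
    (hne : S.Nonempty) : (0 : E) ∈ S := by
  obtain ⟨v, hv⟩ := hne
  simpa using hc hv (hs v hv) (by norm_num : (0 : ℝ) ≤ 1 / 2) (by norm_num : (0 : ℝ) ≤ 1 / 2)
    (by norm_num)

theorem neg_mem_smul_set_of_neg_mem {S : Set E} (hs : ∀ v ∈ S, -v ∈ S) (a : ℝ) :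
    ∀ v ∈ a • S, -v ∈ a • S := by
  rintro _ ⟨s, hsS, rfl⟩
  exact ⟨-s, hs s hsS, smul_neg a s⟩

theorem smul_div_mem_smul_set {S : Set E} (h0 : (0 : E) ∈ S) {a w : ℝ} {v : E}
    (hv : v ∈ a • S) : (w / a) • v ∈ w • S := by
  obtain ⟨s, hsS, rfl⟩ := hv
  rcases eq_or_ne a 0 with rfl | ha
  · simpa using Set.smul_mem_smul_set (a := w) h0
  · rw [smul_smul, div_mul_cancel₀ w ha]
    exact Set.smul_mem_smul_set hsS

theorem Seminorm.exists_dual_eq_of_le (N : Seminorm ℝ E) (x : E) :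
    ∃ ℓ : Module.Dual ℝ E, ℓ x = N x ∧ ∀ v, ℓ v ≤ N v := by
  rcases eq_or_ne x 0 with rfl | hx
  · exact ⟨0, by simp, fun v => apply_nonneg N v⟩
  obtain ⟨ℓ, hext, hle⟩ := exists_extension_of_le_sublinear
    (LinearPMap.mkSpanSingleton x (N x) hx) N
    (fun c hc v => by rw [map_smul_eq_mul, Real.norm_of_nonneg hc.le])
    (map_add_le_add N) (by
      rintro ⟨z, hz⟩
      obtain ⟨c, rfl⟩ := Submodule.mem_span_singleton.1 hz
      rw [LinearPMap.mkSpanSingleton'_apply, smul_eq_mul, map_smul_eq_mul, Real.norm_eq_abs]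
      exact mul_le_mul_of_nonneg_right (le_abs_self c) (apply_nonneg N x))
  refine ⟨ℓ, ?_, hle⟩
  rw [hext ⟨x, Submodule.mem_span_singleton_self x⟩, LinearPMap.mkSpanSingleton_apply]

end General

theorem Real.rpow_mul_rpow_eq_mul_mul {p q a b c : ℝ} (hpq : p.HolderConjugate q)
    (ha : 0 ≤ a) (hb : 0 ≤ b) (hc : 0 ≤ c) :
    (a ^ p * c) ^ (1 / p) * (b ^ q * c) ^ (1 / q) = a * b * c := by
  rw [Real.mul_rpow (Real.rpow_nonneg ha p) hc, Real.mul_rpow (Real.rpow_nonneg hb q) hc,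
    one_div, one_div, Real.rpow_rpow_inv ha hpq.ne_zero, Real.rpow_rpow_inv hb hpq.symm.ne_zero]
  calc a * c ^ p⁻¹ * (b * c ^ q⁻¹) = a * b * (c ^ p⁻¹ * c ^ q⁻¹) := by ring
    _ = a * b * c := by rw [← Real.rpow_add' hc (by simp [hpq.inv_add_inv_eq_one]),
        hpq.inv_add_inv_eq_one, Real.rpow_one]

theorem Real.eq_rpow_mul_rpow_of_holderConjugate {p q a b t : ℝ} (hpq : p.HolderConjugate q)
    (ha : 0 ≤ a) (hb : 0 ≤ b) (ht : 0 ≤ t) (hab : a * b = 0 → t = 0) :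
    t = (a ^ p * (t / (a * b))) ^ (1 / p) * (b ^ q * (t / (a * b))) ^ (1 / q) := by
  rw [Real.rpow_mul_rpow_eq_mul_mul hpq ha hb (div_nonneg ht (mul_nonneg ha hb))]
  rcases eq_or_ne (a * b) 0 with h | h
  · rw [h, hab h, zero_mul]
  · exact (mul_div_cancel₀ t h).symm

section Integral

variable {Ω : Type*} [MeasurableSpace Ω] {μ : Measure Ω}

theorem MeasureTheory.Integrable.memLp_rpow_one_div {F : Ω → ℝ} (hF : Integrable F μ)
    (hF0 : ∀ x, 0 ≤ F x) {p : ℝ} (hp : 0 < p) :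
    MemLp (fun x => F x ^ (1 / p)) (ENNReal.ofReal p) μ := by
  have h := (memLp_one_iff_integrable.mpr hF).norm_rpow_div (ENNReal.ofReal (1 / p))
  rw [ENNReal.toReal_ofReal (by positivity), one_div (ENNReal.ofReal _),
    ← ENNReal.ofReal_inv_of_pos (by positivity), one_div, inv_inv] at h
  simpa only [Real.norm_of_nonneg (hF0 _), one_div] using h

theorem integral_rpow_mul_rpow_le {p q : ℝ} (hpq : p.HolderConjugate q) {F G : Ω → ℝ}
    (hF0 : ∀ x, 0 ≤ F x) (hG0 : ∀ x, 0 ≤ G x) (hF : Integrable F μ) (hG : Integrable G μ) :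
    ∫ x, F x ^ (1 / p) * G x ^ (1 / q) ∂μ ≤
      (∫ x, F x ∂μ) ^ (1 / p) * (∫ x, G x ∂μ) ^ (1 / q) := by
  have h := integral_mul_le_Lp_mul_Lq_of_nonneg hpq
    (ae_of_all _ fun x => Real.rpow_nonneg (hF0 x) _)
    (ae_of_all _ fun x => Real.rpow_nonneg (hG0 x) _)
    (hF.memLp_rpow_one_div hF0 hpq.pos) (hG.memLp_rpow_one_div hG0 hpq.symm.pos)
  simpa only [one_div, Real.rpow_inv_rpow (hF0 _) hpq.ne_zero,
    Real.rpow_inv_rpow (hG0 _) hpq.symm.ne_zero] using h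

end Integral

namespace IsNormFun

variable {ρ : EuclideanSpace ℝ (Fin d) → ℝ}

def toSeminorm (hρ : IsNormFun ρ) : Seminorm ℝ (EuclideanSpace ℝ (Fin d)) :=
  Seminorm.of ρ hρ.1 fun a v => by rw [hρ.2.1, Real.norm_eq_abs]

theorem nonneg (hρ : IsNormFun ρ) (v : EuclideanSpace ℝ (Fin d)) : 0 ≤ ρ v :=
  apply_nonneg hρ.toSeminorm v

theorem exists_le_mul_norm (hρ : IsNormFun ρ) : ∃ C, 0 < C ∧ ∀ v, ρ v ≤ C * ‖v‖ :=
  hρ.toSeminorm.bound_of_continuous_normedSpace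
    hρ.toSeminorm.convexOn.locallyLipschitz.continuous

theorem exists_dual_eq_of_le (hρ : IsNormFun ρ) (y : EuclideanSpace ℝ (Fin d)) :
    ∃ ℓ : EuclideanSpace ℝ (Fin d) →L[ℝ] ℝ, ℓ y = ρ y ∧ ∀ v, ℓ v ≤ ρ v := by
  obtain ⟨ℓ, hℓy, hℓ⟩ := hρ.toSeminorm.exists_dual_eq_of_le y
  exact ⟨LinearMap.toContinuousLinearMap ℓ, hℓy, hℓ⟩

theorem setNorm_nonneg (hρ : IsNormFun ρ) (K : Set (EuclideanSpace ℝ (Fin d))) :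
    0 ≤ setNorm ρ K :=
  Real.sSup_nonneg (by rintro _ ⟨v, -, rfl⟩; exact hρ.nonneg v)

theorem le_setNorm (hρ : IsNormFun ρ) {K : Set (EuclideanSpace ℝ (Fin d))}
    (hK : Bornology.IsBounded K) {y : EuclideanSpace ℝ (Fin d)} (hy : y ∈ K) :
    ρ y ≤ setNorm ρ K := by
  obtain ⟨C, hC0, hC⟩ := hρ.exists_le_mul_norm
  obtain ⟨R, hR⟩ := isBounded_iff_forall_norm_le.1 hK
  refine le_csSup ⟨C * R, ?_⟩ ⟨y, hy, rfl⟩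
  rintro _ ⟨v, hv, rfl⟩
  exact (hC v).trans (mul_le_mul_of_nonneg_left (hR v hv) hC0.le)

end IsNormFun

theorem exists_measurable_selection_abs_eq {Ω E : Type*} [MeasurableSpace Ω] {μ : Measure Ω}
    [NormedAddCommGroup E] [NormedSpace ℝ E] [MeasurableSpace E] [BorelSpace E]
    {G : Ω → Set E} (hG : ∀ x, ∀ v ∈ G x, -v ∈ G x) (ℓ : E →L[ℝ] ℝ) {h : Ω → E}
    (hh : Measurable h) (hsel : ∀ᵐ x ∂μ, h x ∈ G x) :
    ∃ h' : Ω → E, Measurable h' ∧ (∀ᵐ x ∂μ, h' x ∈ G x) ∧ ∀ x, ℓ (h' x) = |ℓ (h x)| := by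
  refine ⟨fun x => if 0 ≤ ℓ (h x) then h x else -h x,
    Measurable.ite (measurableSet_le measurable_const (ℓ.measurable.comp hh)) hh hh.neg,
    hsel.mono fun x hx => ?_, fun x => ?_⟩
  · dsimp only
    split_ifs
    exacts [hx, hG x _ hx]
  · dsimp only
    split_ifs with hx
    exacts [(abs_of_nonneg hx).symm, by rw [map_neg, abs_of_neg (not_le.mp hx)]]

section Aumann

variable {Ω : Type*} [MeasurableSpace Ω] {μ : Measure Ω}
  {F : Ω → Set (EuclideanSpace ℝ (Fin d))}

theorem IntegrablyBounded.integrable_of_ae_mem (hF : IntegrablyBounded μ F)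
    {u : Ω → EuclideanSpace ℝ (Fin d)} (hu : AEStronglyMeasurable u μ)
    (hsel : ∀ᵐ x ∂μ, u x ∈ F x) : Integrable u μ := by
  obtain ⟨k, -, hk, hkF⟩ := hF
  refine hk.mono' hu ?_
  filter_upwards [hsel, hkF] with x hx hkx
  simpa using hkx hx

theorem IntegrablyBounded.integral_mem_aumannIntegral (hF : IntegrablyBounded μ F)
    {u : Ω → EuclideanSpace ℝ (Fin d)} (hu : Measurable u) (hsel : ∀ᵐ x ∂μ, u x ∈ F x) :
    ∫ x, u x ∂μ ∈ AumannIntegral μ F :=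
  ⟨u, hu, hF.integrable_of_ae_mem hu.aestronglyMeasurable hsel, hsel, rfl⟩

theorem IntegrablyBounded.isBounded_aumannIntegral (hF : IntegrablyBounded μ F) :
    Bornology.IsBounded (AumannIntegral μ F) := by
  obtain ⟨k, -, hk, hkF⟩ := hF
  refine isBounded_iff_forall_norm_le.2 ⟨∫ x, k x ∂μ, ?_⟩
  rintro _ ⟨u, -, hu, hsel, rfl⟩
  refine (norm_integral_le_integral_norm u).trans (integral_mono_ae hu.norm hk ?_)
  filter_upwards [hsel, hkF] with x hx hkx
  simpa using hkx hx

variable {ρ : EuclideanSpace ℝ (Fin d) → ℝ}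

theorem IsNormFun.integral_mul_div_le_setNorm (hρ : IsNormFun ρ)
    {ℓ : EuclideanSpace ℝ (Fin d) →L[ℝ] ℝ} (hℓ : ∀ v, ℓ v ≤ ρ v)
    {H : Ω → Set (EuclideanSpace ℝ (Fin d))} (h0 : ∀ x, (0 : EuclideanSpace ℝ (Fin d)) ∈ H x)
    {c w : Ω → ℝ} (hc : Measurable c) (hw : Measurable w)
    {h : Ω → EuclideanSpace ℝ (Fin d)} (hh : Measurable h) (hsel : ∀ᵐ x ∂μ, h x ∈ c x • H x)
    (hwH : IntegrablyBounded μ fun x => w x • H x) :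
    Integrable (fun x => w x * (ℓ (h x) / c x)) μ ∧
      ∫ x, w x * (ℓ (h x) / c x) ∂μ ≤ setNorm ρ (AumannIntegral μ fun x => w x • H x) := by
  set u := fun x => (w x / c x) • h x
  have hu : Measurable u := (hw.div hc).smul hh
  have husel : ∀ᵐ x ∂μ, u x ∈ w x • H x :=
    hsel.mono fun x hx => smul_div_mem_smul_set (h0 x) hx
  have hui : Integrable u μ := hwH.integrable_of_ae_mem hu.aestronglyMeasurable husel
  have hℓu : (fun x => ℓ (u x)) = fun x => w x * (ℓ (h x) / c x) := by
    ext x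
    simp only [u, map_smul, smul_eq_mul]
    ring
  refine ⟨hℓu ▸ ℓ.integrable_comp hui, ?_⟩
  calc ∫ x, w x * (ℓ (h x) / c x) ∂μ = ℓ (∫ x, u x ∂μ) := by
        rw [← hℓu, ℓ.integral_comp_comm hui]
    _ ≤ ρ (∫ x, u x ∂μ) := hℓ _
    _ ≤ _ := hρ.le_setNorm hwH.isBounded_aumannIntegral (hwH.integral_mem_aumannIntegral hu husel)

theorem IsNormFun.exists_selection_le_integral (hρ : IsNormFun ρ)
    {G : Ω → Set (EuclideanSpace ℝ (Fin d))}
    (hG : ∀ x, ∀ v ∈ G x, -v ∈ G x) {y : EuclideanSpace ℝ (Fin d)} (hy : y ∈ AumannIntegral μ G) :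
    ∃ ℓ : EuclideanSpace ℝ (Fin d) →L[ℝ] ℝ, (∀ v, ℓ v ≤ ρ v) ∧
      ∃ h : Ω → EuclideanSpace ℝ (Fin d), Measurable h ∧ (∀ᵐ x ∂μ, h x ∈ G x) ∧
        (∀ x, 0 ≤ ℓ (h x)) ∧ ρ y ≤ ∫ x, ℓ (h x) ∂μ := by
  obtain ⟨h, hh, hhi, hsel, rfl⟩ := hy
  obtain ⟨ℓ, hℓy, hℓ⟩ := hρ.exists_dual_eq_of_le (∫ x, h x ∂μ)
  obtain ⟨h', hh', hsel', hℓh'⟩ := exists_measurable_selection_abs_eq hG ℓ hh hsel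
  refine ⟨ℓ, hℓ, h', hh', hsel', fun x => hℓh' x ▸ abs_nonneg _, ?_⟩
  calc ρ (∫ x, h x ∂μ) = ∫ x, ℓ (h x) ∂μ := by rw [← hℓy, ℓ.integral_comp_comm hhi]
    _ ≤ ∫ x, |ℓ (h x)| ∂μ :=
      integral_mono (ℓ.integrable_comp hhi) (ℓ.integrable_comp hhi).abs fun x => le_abs_self _
    _ = ∫ x, ℓ (h' x) ∂μ := by simp only [hℓh']

theorem IsNormFun.integral_le_setNorm_rpow_mul_setNorm_rpow (hρ : IsNormFun ρ) {p q : ℝ}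
    (hpq : p.HolderConjugate q) {ℓ : EuclideanSpace ℝ (Fin d) →L[ℝ] ℝ} (hℓ : ∀ v, ℓ v ≤ ρ v)
    {H : Ω → Set (EuclideanSpace ℝ (Fin d))} (h0 : ∀ x, (0 : EuclideanSpace ℝ (Fin d)) ∈ H x)
    {f g : Ω → ℝ} (hf : Measurable f) (hg : Measurable g) (hf0 : ∀ x, 0 ≤ f x)
    (hg0 : ∀ x, 0 ≤ g x) {h : Ω → EuclideanSpace ℝ (Fin d)} (hh : Measurable h)
    (hsel : ∀ᵐ x ∂μ, h x ∈ (f x * g x) • H x) (hℓh : ∀ x, 0 ≤ ℓ (h x))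
    (hfH : IntegrablyBounded μ fun x => f x ^ p • H x)
    (hgH : IntegrablyBounded μ fun x => g x ^ q • H x) :
    ∫ x, ℓ (h x) ∂μ ≤ setNorm ρ (AumannIntegral μ fun x => f x ^ p • H x) ^ (1 / p) *
      setNorm ρ (AumannIntegral μ fun x => g x ^ q • H x) ^ (1 / q) := by
  set s := fun x => ℓ (h x) / (f x * g x)
  have hs0 x : 0 ≤ s x := div_nonneg (hℓh x) (mul_nonneg (hf0 x) (hg0 x))
  have hF0 x : 0 ≤ f x ^ p * s x := mul_nonneg (Real.rpow_nonneg (hf0 x) p) (hs0 x)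
  have hG0 x : 0 ≤ g x ^ q * s x := mul_nonneg (Real.rpow_nonneg (hg0 x) q) (hs0 x)
  obtain ⟨hFi, hFle⟩ := hρ.integral_mul_div_le_setNorm hℓ h0 (c := fun x => f x * g x)
    (hf.mul hg) (hf.pow_const p) hh hsel hfH
  obtain ⟨hGi, hGle⟩ := hρ.integral_mul_div_le_setNorm hℓ h0 (c := fun x => f x * g x)
    (hf.mul hg) (hg.pow_const q) hh hsel hgH
  have hfactor : ∀ᵐ x ∂μ, ℓ (h x) = (f x ^ p * s x) ^ (1 / p) * (g x ^ q * s x) ^ (1 / q) := by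
    filter_upwards [hsel] with x hx
    refine Real.eq_rpow_mul_rpow_of_holderConjugate hpq (hf0 x) (hg0 x) (hℓh x) fun hfg => ?_
    have hx0 : h x = 0 := Set.zero_smul_set_subset (H x) (by rwa [hfg] at hx)
    rw [hx0, map_zero]
  have hFint : 0 ≤ ∫ x, f x ^ p * s x ∂μ := integral_nonneg hF0
  have hGint : 0 ≤ ∫ x, g x ^ q * s x ∂μ := integral_nonneg hG0
  calc ∫ x, ℓ (h x) ∂μ = ∫ x, (f x ^ p * s x) ^ (1 / p) * (g x ^ q * s x) ^ (1 / q) ∂μ :=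
        integral_congr_ae hfactor
    _ ≤ (∫ x, f x ^ p * s x ∂μ) ^ (1 / p) * (∫ x, g x ^ q * s x ∂μ) ^ (1 / q) :=
      integral_rpow_mul_rpow_le hpq hF0 hG0 hFi hGi
    _ ≤ _ := mul_le_mul (Real.rpow_le_rpow hFint hFle (one_div_nonneg.2 hpq.nonneg))
      (Real.rpow_le_rpow hGint hGle (one_div_nonneg.2 hpq.symm.nonneg))
      (Real.rpow_nonneg hGint _) (Real.rpow_nonneg (hρ.setNorm_nonneg _) _)

end Aumann

theorem aumann_holder_general {Ω : Type*} [MeasurableSpace Ω]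
    (μ : Measure Ω)
    (ρ : EuclideanSpace ℝ (Fin d) → ℝ) (hρ : IsNormFun ρ)
    (p q : ℝ) (hp : 1 < p) (hpq : 1 / p + 1 / q = 1)
    (H : Ω → Set (EuclideanSpace ℝ (Fin d)))
    (hne : ∀ x, (H x).Nonempty)
    (hc : ∀ x, Convex ℝ (H x)) (hs : ∀ x, ∀ v ∈ H x, -v ∈ H x)
    (f g : Ω → ℝ) (hf : Measurable f) (hg : Measurable g)
    (hf0 : ∀ x, 0 ≤ f x) (hg0 : ∀ x, 0 ≤ g x)
    (hfH : IntegrablyBounded μ (fun x => f x ^ p • H x))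
    (hgH : IntegrablyBounded μ (fun x => g x ^ q • H x)) :
    setNorm ρ (AumannIntegral μ (fun x => (f x * g x) • H x)) ≤
      setNorm ρ (AumannIntegral μ (fun x => f x ^ p • H x)) ^ (1 / p) *
      setNorm ρ (AumannIntegral μ (fun x => g x ^ q • H x)) ^ (1 / q) := by
  have hpq' : p.HolderConjugate q :=
    Real.holderConjugate_iff.2 ⟨hp, by simpa only [one_div] using hpq⟩
  have h0 x : (0 : EuclideanSpace ℝ (Fin d)) ∈ H x := (hc x).zero_mem_of_neg_mem_s16 (hs x) (hne x)
  refine Real.sSup_le ?_ (mul_nonneg (Real.rpow_nonneg (hρ.setNorm_nonneg _) _)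
    (Real.rpow_nonneg (hρ.setNorm_nonneg _) _))
  rintro _ ⟨y, hy, rfl⟩
  obtain ⟨ℓ, hℓ, h, hh, hsel, hℓh, hy⟩ :=
    hρ.exists_selection_le_integral (fun x => neg_mem_smul_set_of_neg_mem (hs x) _) hy
  exact hy.trans (hρ.integral_le_setNorm_rpow_mul_setNorm_rpow hpq' hℓ h0 hf hg hf0 hg0 hh hsel
    hℓh hfH hgH)

/-- Hölder's inequality for Aumann integrals of convex-set valued maps. -/
theorem aumann_holder {Ω : Type*} [MeasurableSpace Ω]
    (μ : Measure Ω) [SigmaFinite μ] (hcompl : μ.IsComplete)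
    (ρ : EuclideanSpace ℝ (Fin d) → ℝ) (hρ : IsNormFun ρ)
    (p q : ℝ) (hp : 1 < p) (hpq : 1 / p + 1 / q = 1)
    (H : Ω → Set (EuclideanSpace ℝ (Fin d)))
    (hne : ∀ x, (H x).Nonempty) (hb : ∀ x, Bornology.IsBounded (H x))
    (hc : ∀ x, Convex ℝ (H x)) (hs : ∀ x, ∀ v ∈ H x, -v ∈ H x)
    (hcl : ∀ x, IsClosed (H x)) (hH : SetValuedMeasurable H)
    (f g : Ω → ℝ) (hf : Measurable f) (hg : Measurable g)
    (hf0 : ∀ x, 0 ≤ f x) (hg0 : ∀ x, 0 ≤ g x)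
    (hfH : IntegrablyBounded μ (fun x => f x ^ p • H x))
    (hgH : IntegrablyBounded μ (fun x => g x ^ q • H x)) :
    setNorm ρ (AumannIntegral μ (fun x => (f x * g x) • H x)) ≤
      setNorm ρ (AumannIntegral μ (fun x => f x ^ p • H x)) ^ (1 / p) *
      setNorm ρ (AumannIntegral μ (fun x => g x ^ q • H x)) ^ (1 / q) :=
  aumann_holder_general μ ρ hρ p q hp hpq H hne hc hs f g hf hg hf0 hg0 hfH hgH
end
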